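/- Let V be an orthogonal representation of G = Γ × S¹ (Γ a finite group), let f : ℝ × C([-r,0]; V) → V be G-equivariant in the sense that f(α, (γ, e^{iτ})·x) = e^{τJ} γ f(α, x), and define Φ(α, w, x) := f̃(α, iw, x) − wJx where f̃(α, λ, x) := f(α, ξ(λ)x) with (ξ(iw)x)(θ) = e^{wJθ}x_* + x₀ for the decomposition x = x₀ + x_* into S¹-fixed and orthogonal parts. Then x(t) := e^{wJt}x₀' is a solution of ẋ(t) = f(α, x_t) if and only if Φ(α, w, x₀') = 0. -/

import Mathlib

/-!
Along the ansatz `x(t) = e^{wJt}x₀` the history segment is `x_t = e^{wJt} ∘ x_0`, so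
`S¹`-equivariance gives `f(α, x_t) = e^{wJt} f(α, x_0)`, while `ẋ(t) = e^{wJt}(wJx₀)`.
Hence the equation `ẋ(t) = f(α, x_t)` at time `t` is the one at time `0` multiplied by `e^{wJt}`,
and at time `0` it reads `f(α, x_0) = wJx₀`, i.e. `Φ(α, w, x₀) = 0`.
-/

open NormedSpace Matrix

namespace Matrix

variable {𝕂 m : Type*} [RCLike 𝕂] [Fintype m] [DecidableEq m]

open scoped Norms.Operator in
theorem hasDerivAt_exp_smul_mulVec (A : Matrix m m 𝕂) (x : m → 𝕂) (t : 𝕂) :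
    HasDerivAt (fun s : 𝕂 => exp (s • A) *ᵥ x) (exp (t • A) *ᵥ (A *ᵥ x)) t := by
  have hL := (LinearMap.toContinuousLinearMap ((mulVecBilin 𝕂 𝕂).flip x)).hasFDerivAt
    |>.comp_hasDerivAt t (hasDerivAt_exp_smul_const A t)
  exact hL.congr_deriv (by rw [mulVec_mulVec]; rfl)

theorem exp_add_smul (A : Matrix m m 𝕂) (a b : 𝕂) :
    exp ((a + b) • A) = exp (a • A) * exp (b • A) := by
  rw [add_smul]
  exact exp_add_of_commute _ _ (((Commute.refl A).smul_right b).smul_left a)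

end Matrix

-- `ξ(iw)y (θ) = e^{wJθ}y_* + y₀ = e^{wJθ}y`, since `e^{τJ}` fixes `V₀ = V^{S¹}`.
theorem stmt5_general {n : ℕ} (r : ℝ) (J : Matrix (Fin n) (Fin n) ℝ)
    (f : ℝ → ((Set.Icc (-r) (0:ℝ)) → (Fin n → ℝ)) → (Fin n → ℝ))
    (hequiv : ∀ (α τ : ℝ) (x : (Set.Icc (-r) (0:ℝ)) → (Fin n → ℝ)),
        f α (fun θ => (exp (τ • J)).mulVec (x θ)) = (exp (τ • J)).mulVec (f α x))
    (α w : ℝ) (x₀ : Fin n → ℝ)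
    (Φ : ℝ → ℝ → (Fin n → ℝ) → (Fin n → ℝ))
    (hΦ : ∀ (a b : ℝ) (y : Fin n → ℝ),
        Φ a b y = f a (fun θ => (exp ((b * (θ : ℝ)) • J)).mulVec y) - b • J.mulVec y) :
    (∀ t : ℝ, HasDerivAt (fun s : ℝ => (exp ((w * s) • J)).mulVec x₀)
        (f α (fun θ => (exp ((w * (t + (θ : ℝ))) • J)).mulVec x₀)) t)
      ↔ Φ α w x₀ = 0 := by
  rw [hΦ, sub_eq_zero]
  set g := f α (fun θ => exp ((w * θ) • J) *ᵥ x₀)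
  have hshift (t : ℝ) :
      f α (fun θ => exp ((w * (t + θ)) • J) *ᵥ x₀) = exp ((w * t) • J) *ᵥ g := by
    simp_rw [mul_add, exp_add_smul, ← mulVec_mulVec]
    exact hequiv α (w * t) _
  have hderiv (t : ℝ) : HasDerivAt (fun s : ℝ => exp ((w * s) • J) *ᵥ x₀)
      (exp ((w * t) • J) *ᵥ (w • J *ᵥ x₀)) t := by
    simpa [mul_comm w, mul_smul, smul_mulVec] using hasDerivAt_exp_smul_mulVec (w • J) x₀ t
  simp_rw [hshift]
  constructor
  · intro h
    simpa using (h 0).unique (hderiv 0)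
  · intro h t
    rw [h]
    exact hderiv t

open NormedSpace in
/-- For a `Γ × S¹`-equivariant functional `f` (here we record the
`S¹`-equivariance `f(α, e^{τJ}∘x) = e^{τJ} f(α,x)`), the rotating-wave ansatz
`x(t) = e^{wJt}x₀` solves the FDE `ẋ(t) = f(α, x_t)` if and only if
`Φ(α,w,x₀) := f̃(α, iw, x₀) − wJx₀ = 0`, where `f̃(α,iw,y) = f(α, θ ↦ e^{wJθ}y)`
(note that `ξ(iw)y (θ) = e^{wJθ}y_* + y₀ = e^{wJθ}y` since `e^{τJ}` fixes `V₀ = V^{S¹}`). -/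
theorem stmt5 {n : ℕ} (r : ℝ) (hr : 0 < r) (J : Matrix (Fin n) (Fin n) ℝ)
    (hOrth : ∀ τ : ℝ, exp (τ • J) ∈ Matrix.orthogonalGroup (Fin n) ℝ)
    (f : ℝ → ((Set.Icc (-r) (0:ℝ)) → (Fin n → ℝ)) → (Fin n → ℝ))
    (hequiv : ∀ (α τ : ℝ) (x : (Set.Icc (-r) (0:ℝ)) → (Fin n → ℝ)),
        f α (fun θ => (exp (τ • J)).mulVec (x θ)) = (exp (τ • J)).mulVec (f α x))
    (α w : ℝ) (x₀ : Fin n → ℝ)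
    (Φ : ℝ → ℝ → (Fin n → ℝ) → (Fin n → ℝ))
    (hΦ : ∀ (a b : ℝ) (y : Fin n → ℝ),
        Φ a b y = f a (fun θ => (exp ((b * (θ : ℝ)) • J)).mulVec y) - b • J.mulVec y) :
    (∀ t : ℝ, HasDerivAt (fun s : ℝ => (exp ((w * s) • J)).mulVec x₀)
        (f α (fun θ => (exp ((w * (t + (θ : ℝ))) • J)).mulVec x₀)) t)
      ↔ Φ α w x₀ = 0 :=
  stmt5_general r J f hequiv α w x₀ Φ hΦ
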